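/- Let M_X = |+⟩⟨+| ⊗ (|x₊x₊⟩⟨x₊x₊| + |x̄₊x̄₊⟩⟨x̄₊x̄₊|) + |−⟩⟨−| ⊗ (I − |x₋x₋'⟩⟨x₋x₋'|) acting on (ℂ²)^⊗3, where |±⟩ = (|0⟩ ± |1⟩)/√2, |x₊⟩ = cos α |0⟩ + sin α |1⟩ and |x̄₊⟩ = sin α |0⟩ − cos α |1⟩ with tan α = (√5 − 1)/2, α ∈ (0, π/2), |x₋⟩ = (|0⟩ + e^{iπ/3}|1⟩)/√2 and |x₋'⟩ = (|0⟩ + e^{−iπ/3}|1⟩)/√2. Then M_X is an orthogonal projector satisfying M_X |GHZ⟩ = |GHZ⟩ and M_X |W⟩ = |W⟩; i.e., M_X is a valid test operator for the three-qubit GHZ-W subspace. -/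

import Mathlib

noncomputable section

open Matrix

/-- The three-qubit index type: (ℂ²)^⊗3 is realized as functions Fin 2 × Fin 2 × Fin 2 → ℂ. -/
abbrev T3 := Fin 2 × Fin 2 × Fin 2

/-- Standard basis vector of ℂ². -/
def e2 (i : Fin 2) : Fin 2 → ℂ := fun j => if j = i then 1 else 0

/-- The simple tensor u ⊗ v in ℂ² ⊗ ℂ². -/
def tp2 (u v : Fin 2 → ℂ) : Fin 2 × Fin 2 → ℂ := fun p => u p.1 * v p.2

/-- The simple tensor u ⊗ v ⊗ w in (ℂ²)^⊗3. -/
def tp3 (u v w : Fin 2 → ℂ) : T3 → ℂ := fun p => u p.1 * v p.2.1 * w p.2.2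

/-- Standard basis vector |ijk⟩ of (ℂ²)^⊗3. -/
def ket3 (i j k : Fin 2) : T3 → ℂ := tp3 (e2 i) (e2 j) (e2 k)

/-- The three-qubit GHZ state (|000⟩ + |111⟩)/√2. -/
def GHZ : T3 → ℂ := (Real.sqrt 2 : ℂ)⁻¹ • (ket3 0 0 0 + ket3 1 1 1)

/-- The three-qubit W state (|001⟩ + |010⟩ + |100⟩)/√3. -/
def Wst : T3 → ℂ := (Real.sqrt 3 : ℂ)⁻¹ • (ket3 0 0 1 + ket3 0 1 0 + ket3 1 0 0)

/-- Outer product |u⟩⟨v| as a matrix. -/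
def outer {n : Type*} (u v : n → ℂ) : Matrix n n ℂ := fun i j => u i * star (v j)

/-- Kronecker (tensor) product of matrices, indexed by the product type. -/
def kron {m n : Type*} (A : Matrix m m ℂ) (B : Matrix n n ℂ) :
    Matrix (m × n) (m × n) ℂ := fun p q => A p.1 q.1 * B p.2 q.2

/-- The adaptive test operator M_Z = |0⟩⟨0| ⊗ (I − |11⟩⟨11|) + |1⟩⟨1| ⊗ (|00⟩⟨00| + |11⟩⟨11|). -/
def MZ : Matrix T3 T3 ℂ :=
  kron (outer (e2 0) (e2 0)) (1 - outer (tp2 (e2 1) (e2 1)) (tp2 (e2 1) (e2 1))) +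
  kron (outer (e2 1) (e2 1))
    (outer (tp2 (e2 0) (e2 0)) (tp2 (e2 0) (e2 0)) + outer (tp2 (e2 1) (e2 1)) (tp2 (e2 1) (e2 1)))

/-- |x₊⟩ = cos α |0⟩ + sin α |1⟩. -/
def xp (α : ℝ) : Fin 2 → ℂ := (Real.cos α : ℂ) • e2 0 + (Real.sin α : ℂ) • e2 1

/-- |x̄₊⟩ = sin α |0⟩ − cos α |1⟩. -/
def xbp (α : ℝ) : Fin 2 → ℂ := (Real.sin α : ℂ) • e2 0 - (Real.cos α : ℂ) • e2 1

/-- |x₋⟩ = (|0⟩ + e^{iπ/3}|1⟩)/√2. -/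
def xm : Fin 2 → ℂ :=
  (Real.sqrt 2 : ℂ)⁻¹ • (e2 0 + Complex.exp ((Real.pi / 3 : ℂ) * Complex.I) • e2 1)

/-- |x₋'⟩ = (|0⟩ + e^{−iπ/3}|1⟩)/√2. -/
def xm' : Fin 2 → ℂ :=
  (Real.sqrt 2 : ℂ)⁻¹ • (e2 0 + Complex.exp (-(Real.pi / 3 : ℂ) * Complex.I) • e2 1)

/-- |+⟩ = (|0⟩ + |1⟩)/√2. -/
def plus : Fin 2 → ℂ := (Real.sqrt 2 : ℂ)⁻¹ • (e2 0 + e2 1)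

/-- |−⟩ = (|0⟩ − |1⟩)/√2. -/
def minus : Fin 2 → ℂ := (Real.sqrt 2 : ℂ)⁻¹ • (e2 0 - e2 1)

/-- The one-way adaptive test operator
M_X = |+⟩⟨+| ⊗ (|x₊x₊⟩⟨x₊x₊| + |x̄₊x̄₊⟩⟨x̄₊x̄₊|) + |−⟩⟨−| ⊗ (I − |x₋x₋'⟩⟨x₋x₋'|). -/
def MX (α : ℝ) : Matrix T3 T3 ℂ :=
  kron (outer plus plus)
    (outer (tp2 (xp α) (xp α)) (tp2 (xp α) (xp α)) +
      outer (tp2 (xbp α) (xbp α)) (tp2 (xbp α) (xbp α))) +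
  kron (outer minus minus) (1 - outer (tp2 xm xm') (tp2 xm xm'))

/-- The qubit-permutation unitary V_σ with V_σ|i₁i₂i₃⟩ = |i_{σ⁻¹(1)} i_{σ⁻¹(2)} i_{σ⁻¹(3)}⟩,
as a matrix: (V_σ)_{p,q} = 1 iff the triple p precomposed with σ equals the triple q. -/
def permMat (σ : Equiv.Perm (Fin 3)) : Matrix T3 T3 ℂ :=
  fun p q => if (![p.1, p.2.1, p.2.2] ∘ σ) = ![q.1, q.2.1, q.2.2] then 1 else 0

/-- The single-qubit phase rotation R_φ = |0⟩⟨0| + e^{iφ}|1⟩⟨1|. -/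
def Rphi (φ : ℝ) : Matrix (Fin 2) (Fin 2) ℂ :=
  outer (e2 0) (e2 0) + Complex.exp ((φ : ℂ) * Complex.I) • outer (e2 1) (e2 1)

/-- The local unitary U₁ = R_{2π/3} ⊗ R_{2π/3} ⊗ R_{2π/3}. -/
def U1 : Matrix T3 T3 ℂ :=
  kron (Rphi (2 * Real.pi / 3)) (kron (Rphi (2 * Real.pi / 3)) (Rphi (2 * Real.pi / 3)))

/-- The projector Π₃ = |GHZ⟩⟨GHZ| + |W⟩⟨W| onto the GHZ-W subspace. -/
def Pi3 : Matrix T3 T3 ℂ := outer GHZ GHZ + outer Wst Wst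

/-- v₁ = (|000⟩ − |111⟩)/√2. -/
def v1 : T3 → ℂ := (Real.sqrt 2 : ℂ)⁻¹ • (ket3 0 0 0 - ket3 1 1 1)
/-- v₂ = (|001⟩ − |010⟩)/√2. -/
def v2 : T3 → ℂ := (Real.sqrt 2 : ℂ)⁻¹ • (ket3 0 0 1 - ket3 0 1 0)
/-- v₃ = (|001⟩ − |100⟩)/√2. -/
def v3 : T3 → ℂ := (Real.sqrt 2 : ℂ)⁻¹ • (ket3 0 0 1 - ket3 1 0 0)
/-- v₄ = (|011⟩ − |101⟩)/√2. -/
def v4 : T3 → ℂ := (Real.sqrt 2 : ℂ)⁻¹ • (ket3 0 1 1 - ket3 1 0 1)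
/-- v₅ = (|011⟩ − |110⟩)/√2. -/
def v5 : T3 → ℂ := (Real.sqrt 2 : ℂ)⁻¹ • (ket3 0 1 1 - ket3 1 1 0)
/-- v₆ = (|011⟩ + |101⟩ + |110⟩)/√3. -/
def v6 : T3 → ℂ := (Real.sqrt 3 : ℂ)⁻¹ • (ket3 0 1 1 + ket3 1 0 1 + ket3 1 1 0)

/-- σᵢ: the transposition exchanging qubits 1 and i (σ₁ = identity). -/
def sigmas : Fin 3 → Equiv.Perm (Fin 3) := ![1, Equiv.swap 0 1, Equiv.swap 0 2]

/-- M_{X,i} = V_{σᵢ} M_X V_{σᵢ}†: the test operator starting with an X measurement on qubit i. -/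
def MXi (α : ℝ) (i : Fin 3) : Matrix T3 T3 ℂ :=
  permMat (sigmas i) * MX α * (permMat (sigmas i))ᴴ

/-- The symmetrized test operator M̂_X = (1/9) Σ_{i=1}^{3} Σ_{j=0}^{2} U₁^{−j} M_{X,i} U₁^{j}. -/
def MXhat (α : ℝ) : Matrix T3 T3 ℂ :=
  ((1 : ℂ) / 9) • ∑ i : Fin 3, ∑ j : Fin 3, (U1 ^ (j : ℕ))⁻¹ * MXi α i * U1 ^ (j : ℕ)

/-- The rotation-strategy verification operator Ω_μ = (1 − μ) M_Z + μ M̂_X. -/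
def Omega (α μ : ℝ) : Matrix T3 T3 ℂ := ((1 - μ : ℝ) : ℂ) • MZ + (μ : ℂ) • MXhat α

/-- The projected verification operator Ω̂ = (I − Π₃) Ω_μ (I − Π₃). -/
def OmegaHat (α μ : ℝ) : Matrix T3 T3 ℂ := (1 - Pi3) * Omega α μ * (1 - Pi3)

/-- The set of (real) eigenvalues of Ω̂. -/
def eigSet (α μ : ℝ) : Set ℝ :=
  {r : ℝ | ∃ w : T3 → ℂ, w ≠ 0 ∧ OmegaHat α μ *ᵥ w = (r : ℂ) • w}


/-!
`M_X` is `|+⟩⟨+| ⊗ P₊ + |−⟩⟨−| ⊗ P₋` with `P₊`, `P₋` orthogonal projectors on the last two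
qubits, so it is an orthogonal projector. Expanding the first qubit of `|GHZ⟩` and `|W⟩` in the
basis `|±⟩`, it remains to see that each conditional two-qubit state is fixed by its test.
On the `+` branch, `|00⟩ + |11⟩ = |x₊x₊⟩ + |x̄₊x̄₊⟩` for every `α`, while `|00⟩ + |01⟩ + |10⟩` lies in
`span {|x₊x₊⟩, |x̄₊x̄₊⟩}` once `sin α cos α = cos² α − sin² α`, i.e. `tan 2α = 2`, which is
what `tan α = (√5 − 1)/2` gives. On the `−` branch, `|00⟩ − |11⟩` and `|01⟩ + |10⟩ − |00⟩` are
orthogonal to `|x₋x₋'⟩ = |x₋⟩ ⊗ |x̄₋⟩` because `ω = e^{iπ/3}` has `|ω| = 1` and `ω + ω̄ = 1`.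
-/

open scoped Kronecker

section Kronecker

variable {m n : Type*}

def vkron (u : m → ℂ) (v : n → ℂ) : m × n → ℂ := fun p => u p.1 * v p.2

lemma kron_eq_kronecker (A : Matrix m m ℂ) (B : Matrix n n ℂ) : kron A B = A ⊗ₖ B := rfl

lemma outer_eq_vecMulVec (u v : n → ℂ) : outer u v = vecMulVec u (star v) := rfl

variable [Fintype m] [Fintype n]

lemma kron_mulVec_vkron (A : Matrix m m ℂ) (B : Matrix n n ℂ) (u : m → ℂ) (v : n → ℂ) :
    kron A B *ᵥ vkron u v = vkron (A *ᵥ u) (B *ᵥ v) := by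
  funext p
  simp only [mulVec, dotProduct, vkron, kron, Finset.sum_mul_sum, Fintype.sum_prod_type]
  exact Finset.sum_congr rfl fun _ _ => Finset.sum_congr rfl fun _ _ => by ring

lemma star_vkron_dotProduct_vkron (u w : m → ℂ) (v x : n → ℂ) :
    star (vkron u v) ⬝ᵥ vkron w x = (star u ⬝ᵥ w) * (star v ⬝ᵥ x) := by
  simp only [dotProduct, vkron, Pi.star_apply, star_mul', Finset.sum_mul_sum,
    Fintype.sum_prod_type]
  exact Finset.sum_congr rfl fun _ _ => Finset.sum_congr rfl fun _ _ => by ring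

lemma outer_mulVec (u v w : n → ℂ) : outer u v *ᵥ w = (star v ⬝ᵥ w) • u := by
  rw [outer_eq_vecMulVec, vecMulVec_mulVec, op_smul_eq_smul]

lemma outer_mul_outer (u v w x : n → ℂ) :
    outer u v * outer w x = (star v ⬝ᵥ w) • outer u x := by
  rw [outer_eq_vecMulVec, outer_eq_vecMulVec, vecMulVec_mul_vecMulVec, outer_eq_vecMulVec]
  ext i j
  simp [vecMulVec_apply, mul_left_comm]

lemma isStarProjection_outer_self {u : n → ℂ} (hu : star u ⬝ᵥ u = 1) :
    IsStarProjection (outer u u) := by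
  rw [isStarProjection_iff', outer_mul_outer, hu, one_smul, star_eq_conjTranspose,
    outer_eq_vecMulVec, conjTranspose_vecMulVec, star_star]
  exact ⟨rfl, rfl⟩

lemma isStarProjection_outer_add_outer {u v : n → ℂ} (hu : star u ⬝ᵥ u = 1)
    (hv : star v ⬝ᵥ v = 1) (huv : star u ⬝ᵥ v = 0) :
    IsStarProjection (outer u u + outer v v) :=
  (isStarProjection_outer_self hu).add (isStarProjection_outer_self hv) <| by
    rw [outer_mul_outer, huv, zero_smul]

lemma outer_add_outer_mulVec_smul_add_smul {u v : n → ℂ} (hu : star u ⬝ᵥ u = 1)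
    (hv : star v ⬝ᵥ v = 1) (huv : star u ⬝ᵥ v = 0) (a b : ℂ) :
    (outer u u + outer v v) *ᵥ (a • u + b • v) = a • u + b • v := by
  have hvu : star v ⬝ᵥ u = 0 := by rw [star_dotProduct, huv, star_zero]
  simp only [add_mulVec, mulVec_add, mulVec_smul, outer_mulVec, hu, hv, huv, hvu, one_smul,
    zero_smul, add_zero, zero_add]

lemma one_sub_outer_mulVec_of_orthogonal [DecidableEq n] {u w : n → ℂ}
    (huw : star u ⬝ᵥ w = 0) : (1 - outer u u) *ᵥ w = w := by
  rw [sub_mulVec, one_mulVec, outer_mulVec, huw, zero_smul, sub_zero]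

lemma IsStarProjection.kron {P : Matrix m m ℂ} {A : Matrix n n ℂ} (hP : IsStarProjection P)
    (hA : IsStarProjection A) : IsStarProjection (kron P A) := by
  rw [isStarProjection_iff', kron_eq_kronecker, ← mul_kronecker_mul, hP.isIdempotentElem.eq,
    hA.isIdempotentElem.eq, star_eq_conjTranspose, conjTranspose_kronecker,
    ← star_eq_conjTranspose, ← star_eq_conjTranspose, hP.isSelfAdjoint.star_eq,
    hA.isSelfAdjoint.star_eq]
  exact ⟨rfl, rfl⟩

lemma isStarProjection_kron_add_kron {P Q : Matrix m m ℂ} {A B : Matrix n n ℂ}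
    (hP : IsStarProjection P) (hQ : IsStarProjection Q) (hPQ : P * Q = 0)
    (hA : IsStarProjection A) (hB : IsStarProjection B) :
    IsStarProjection (kron P A + kron Q B) :=
  (hP.kron hA).add (hQ.kron hB) <| by
    rw [kron_eq_kronecker, kron_eq_kronecker, ← mul_kronecker_mul, hPQ, zero_kronecker]

lemma kron_add_kron_mulVec_vkron {P Q : Matrix m m ℂ} {u : m → ℂ} (hP : P *ᵥ u = u)
    (hQ : Q *ᵥ u = 0) (A B : Matrix n n ℂ) (v : n → ℂ) :
    (kron P A + kron Q B) *ᵥ vkron u v = vkron u (A *ᵥ v) := by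
  rw [add_mulVec, kron_mulVec_vkron, kron_mulVec_vkron, hP, hQ]
  funext p
  simp [vkron]

end Kronecker

lemma tp2_eq_vkron (u v : Fin 2 → ℂ) : tp2 u v = vkron u v := rfl

lemma inv_sqrt_two_mul_self : ((Real.sqrt 2 : ℂ)⁻¹) * (Real.sqrt 2 : ℂ)⁻¹ = 2⁻¹ := by
  rw [← mul_inv, ← Complex.ofReal_mul, Real.mul_self_sqrt zero_le_two]
  norm_num

lemma star_plus_dotProduct_plus : star plus ⬝ᵥ plus = 1 := by
  simp [plus, e2]
  linear_combination 2 * inv_sqrt_two_mul_self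

lemma star_minus_dotProduct_minus : star minus ⬝ᵥ minus = 1 := by
  simp [minus, e2]
  linear_combination 2 * inv_sqrt_two_mul_self

lemma star_plus_dotProduct_minus : star plus ⬝ᵥ minus = 0 := by
  simp [plus, minus, e2]

lemma star_minus_dotProduct_plus : star minus ⬝ᵥ plus = 0 := by
  simp [plus, minus, e2]

section SixthRootOfUnity

open ComplexConjugate

local notation "ω" => Complex.exp ((Real.pi / 3 : ℂ) * Complex.I)

lemma ofReal_pi_div_three : ((Real.pi / 3 : ℝ) : ℂ) = Real.pi / 3 := by push_cast; rfl

lemma conj_exp_pi_div_three_mul_I_mul_self : conj ω * ω = 1 := by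
  rw [mul_comm, Complex.mul_conj, Complex.normSq_eq_norm_sq, ← ofReal_pi_div_three,
    Complex.norm_exp_ofReal_mul_I]
  norm_num

lemma exp_pi_div_three_mul_I_add_conj : ω + conj ω = 1 := by
  rw [Complex.add_conj, ← ofReal_pi_div_three, Complex.exp_ofReal_mul_I_re, Real.cos_pi_div_three]
  norm_num

lemma exp_neg_pi_div_three_mul_I : Complex.exp (-(Real.pi / 3 : ℂ) * Complex.I) = conj ω := by
  rw [← Complex.exp_conj]
  congr 1
  simp [Complex.conj_ofReal, map_ofNat]

lemma xm'_eq_star_xm : xm' = star xm := by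
  rw [xm', exp_neg_pi_div_three_mul_I]
  funext i
  fin_cases i <;> simp [xm, e2]

lemma star_xm_dotProduct_xm : star xm ⬝ᵥ xm = 1 := by
  simp [xm, e2]
  linear_combination (1 + ω * conj ω) * inv_sqrt_two_mul_self +
    2⁻¹ * conj_exp_pi_div_three_mul_I_mul_self

end SixthRootOfUnity

def testPlus (α : ℝ) : Matrix (Fin 2 × Fin 2) (Fin 2 × Fin 2) ℂ :=
  outer (tp2 (xp α) (xp α)) (tp2 (xp α) (xp α)) +
    outer (tp2 (xbp α) (xbp α)) (tp2 (xbp α) (xbp α))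

def testMinus : Matrix (Fin 2 × Fin 2) (Fin 2 × Fin 2) ℂ :=
  1 - outer (tp2 xm xm') (tp2 xm xm')

lemma MX_eq_kron_add_kron (α : ℝ) :
    MX α = kron (outer plus plus) (testPlus α) + kron (outer minus minus) testMinus := rfl

def ghzBranchPlus : Fin 2 × Fin 2 → ℂ := tp2 (e2 0) (e2 0) + tp2 (e2 1) (e2 1)

def ghzBranchMinus : Fin 2 × Fin 2 → ℂ := tp2 (e2 0) (e2 0) - tp2 (e2 1) (e2 1)

def wBranchPlus : Fin 2 × Fin 2 → ℂ := tp2 (e2 0) (e2 0) + tp2 (e2 0) (e2 1) + tp2 (e2 1) (e2 0)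

def wBranchMinus : Fin 2 × Fin 2 → ℂ := tp2 (e2 0) (e2 1) + tp2 (e2 1) (e2 0) - tp2 (e2 0) (e2 0)

section Rotated

variable (α : ℝ)

lemma ofReal_cos_sq_add_ofReal_sin_sq : (Real.cos α : ℂ) ^ 2 + (Real.sin α : ℂ) ^ 2 = 1 := by
  exact_mod_cast Real.cos_sq_add_sin_sq α

lemma star_xp_dotProduct_xp : star (xp α) ⬝ᵥ xp α = 1 := by
  simp [xp, e2, -Complex.ofReal_cos, -Complex.ofReal_sin]
  linear_combination ofReal_cos_sq_add_ofReal_sin_sq α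

lemma star_xbp_dotProduct_xbp : star (xbp α) ⬝ᵥ xbp α = 1 := by
  simp [xbp, e2, -Complex.ofReal_cos, -Complex.ofReal_sin]
  linear_combination ofReal_cos_sq_add_ofReal_sin_sq α

lemma star_xp_dotProduct_xbp : star (xp α) ⬝ᵥ xbp α = 0 := by
  simp [xp, xbp, e2, -Complex.ofReal_cos, -Complex.ofReal_sin]
  ring

lemma star_xpxp_dotProduct_xpxp : star (tp2 (xp α) (xp α)) ⬝ᵥ tp2 (xp α) (xp α) = 1 := by
  rw [tp2_eq_vkron, star_vkron_dotProduct_vkron, star_xp_dotProduct_xp, one_mul]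

lemma star_xbpxbp_dotProduct_xbpxbp :
    star (tp2 (xbp α) (xbp α)) ⬝ᵥ tp2 (xbp α) (xbp α) = 1 := by
  rw [tp2_eq_vkron, star_vkron_dotProduct_vkron, star_xbp_dotProduct_xbp, one_mul]

lemma star_xpxp_dotProduct_xbpxbp : star (tp2 (xp α) (xp α)) ⬝ᵥ tp2 (xbp α) (xbp α) = 0 := by
  rw [tp2_eq_vkron, tp2_eq_vkron, star_vkron_dotProduct_vkron, star_xp_dotProduct_xbp, zero_mul]

lemma isStarProjection_testPlus : IsStarProjection (testPlus α) :=
  isStarProjection_outer_add_outer (star_xpxp_dotProduct_xpxp α)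
    (star_xbpxbp_dotProduct_xbpxbp α) (star_xpxp_dotProduct_xbpxbp α)

lemma testPlus_mulVec_smul_add_smul (a b : ℂ) :
    testPlus α *ᵥ (a • tp2 (xp α) (xp α) + b • tp2 (xbp α) (xbp α)) =
      a • tp2 (xp α) (xp α) + b • tp2 (xbp α) (xbp α) :=
  outer_add_outer_mulVec_smul_add_smul (star_xpxp_dotProduct_xpxp α)
    (star_xbpxbp_dotProduct_xbpxbp α) (star_xpxp_dotProduct_xbpxbp α) a b

lemma ghzBranchPlus_eq : ghzBranchPlus = tp2 (xp α) (xp α) + tp2 (xbp α) (xbp α) := by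
  have h := ofReal_cos_sq_add_ofReal_sin_sq α
  funext ⟨i, j⟩
  fin_cases i <;> fin_cases j <;>
    simp [ghzBranchPlus, tp2, xp, xbp, e2, -Complex.ofReal_cos, -Complex.ofReal_sin]
  · linear_combination -h
  · ring
  · ring
  · linear_combination -h

lemma wBranchPlus_eq (hα : Real.sin α * Real.cos α = Real.cos α ^ 2 - Real.sin α ^ 2) :
    wBranchPlus =
      ((Real.cos α : ℂ) ^ 2 + 2 * Real.cos α * Real.sin α) • tp2 (xp α) (xp α) +
      ((Real.sin α : ℂ) ^ 2 - 2 * Real.sin α * Real.cos α) • tp2 (xbp α) (xbp α) := by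
  have h := ofReal_cos_sq_add_ofReal_sin_sq α
  have hsc : (Real.sin α : ℂ) * Real.cos α = (Real.cos α : ℂ) ^ 2 - (Real.sin α : ℂ) ^ 2 := by
    exact_mod_cast hα
  set c : ℂ := ((Real.cos α : ℝ) : ℂ)
  set s : ℂ := ((Real.sin α : ℝ) : ℂ)
  funext ⟨i, j⟩
  fin_cases i <;> fin_cases j <;>
    simp [wBranchPlus, tp2, xp, xbp, e2, -Complex.ofReal_cos, -Complex.ofReal_sin]
  · linear_combination -(1 + c ^ 2 + s ^ 2) * h + 2 * c * s * hsc
  · linear_combination -(1 + 2 * s ^ 2 + c * s) * h - (1 - 2 * s ^ 2) * hsc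
  · linear_combination -(1 + 2 * s ^ 2 + c * s) * h - (1 - 2 * s ^ 2) * hsc
  · linear_combination -2 * c * s * hsc

lemma testPlus_mulVec_ghzBranchPlus : testPlus α *ᵥ ghzBranchPlus = ghzBranchPlus := by
  rw [ghzBranchPlus_eq α]
  simpa using testPlus_mulVec_smul_add_smul α 1 1

lemma testPlus_mulVec_wBranchPlus
    (hα : Real.sin α * Real.cos α = Real.cos α ^ 2 - Real.sin α ^ 2) :
    testPlus α *ᵥ wBranchPlus = wBranchPlus := by
  rw [wBranchPlus_eq α hα]
  exact testPlus_mulVec_smul_add_smul α _ _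

end Rotated

lemma star_xmxm'_dotProduct_xmxm' : star (tp2 xm xm') ⬝ᵥ tp2 xm xm' = 1 := by
  rw [tp2_eq_vkron, star_vkron_dotProduct_vkron, xm'_eq_star_xm, star_star, dotProduct_comm xm,
    star_xm_dotProduct_xm, one_mul]

lemma star_xmxm'_dotProduct_tp2_e2 (i j : Fin 2) :
    star (tp2 xm xm') ⬝ᵥ tp2 (e2 i) (e2 j) = star (xm i) * xm j := by
  rw [tp2_eq_vkron, tp2_eq_vkron, star_vkron_dotProduct_vkron, xm'_eq_star_xm]
  fin_cases i <;> fin_cases j <;> simp [e2]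

lemma isStarProjection_testMinus : IsStarProjection testMinus :=
  (isStarProjection_outer_self star_xmxm'_dotProduct_xmxm').one_sub

lemma testMinus_mulVec_ghzBranchMinus : testMinus *ᵥ ghzBranchMinus = ghzBranchMinus := by
  refine one_sub_outer_mulVec_of_orthogonal ?_
  rw [ghzBranchMinus, dotProduct_sub, star_xmxm'_dotProduct_tp2_e2, star_xmxm'_dotProduct_tp2_e2]
  simp [xm, e2]
  linear_combination -((Real.sqrt 2 : ℂ)⁻¹ * (Real.sqrt 2 : ℂ)⁻¹) *
    conj_exp_pi_div_three_mul_I_mul_self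

lemma testMinus_mulVec_wBranchMinus : testMinus *ᵥ wBranchMinus = wBranchMinus := by
  refine one_sub_outer_mulVec_of_orthogonal ?_
  rw [wBranchMinus, dotProduct_sub, dotProduct_add, star_xmxm'_dotProduct_tp2_e2,
    star_xmxm'_dotProduct_tp2_e2, star_xmxm'_dotProduct_tp2_e2]
  simp [xm, e2]
  linear_combination ((Real.sqrt 2 : ℂ)⁻¹ * (Real.sqrt 2 : ℂ)⁻¹) * exp_pi_div_three_mul_I_add_conj

lemma isStarProjection_MX (α : ℝ) : IsStarProjection (MX α) :=
  isStarProjection_kron_add_kron (isStarProjection_outer_self star_plus_dotProduct_plus)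
    (isStarProjection_outer_self star_minus_dotProduct_minus)
    (by rw [outer_mul_outer, star_plus_dotProduct_minus, zero_smul])
    (isStarProjection_testPlus α) isStarProjection_testMinus

lemma MX_mulVec_vkron_plus (α : ℝ) (v : Fin 2 × Fin 2 → ℂ) :
    MX α *ᵥ vkron plus v = vkron plus (testPlus α *ᵥ v) :=
  kron_add_kron_mulVec_vkron
    (by rw [outer_mulVec, star_plus_dotProduct_plus, one_smul])
    (by rw [outer_mulVec, star_minus_dotProduct_plus, zero_smul]) _ _ v

lemma MX_mulVec_vkron_minus (α : ℝ) (v : Fin 2 × Fin 2 → ℂ) :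
    MX α *ᵥ vkron minus v = vkron minus (testMinus *ᵥ v) := by
  rw [MX_eq_kron_add_kron, add_comm]
  exact kron_add_kron_mulVec_vkron
    (by rw [outer_mulVec, star_minus_dotProduct_minus, one_smul])
    (by rw [outer_mulVec, star_plus_dotProduct_minus, zero_smul]) _ _ v

lemma GHZ_eq : GHZ = (2 : ℂ)⁻¹ • (vkron plus ghzBranchPlus + vkron minus ghzBranchMinus) := by
  funext ⟨i, j, k⟩
  fin_cases i <;> fin_cases j <;> fin_cases k <;>
    simp [GHZ, ghzBranchPlus, ghzBranchMinus, vkron, ket3, tp3, tp2, e2, plus, minus] <;> ring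

lemma Wst_eq : Wst = ((Real.sqrt 3 : ℂ)⁻¹ * (Real.sqrt 2 : ℂ)⁻¹) •
    (vkron plus wBranchPlus + vkron minus wBranchMinus) := by
  funext ⟨i, j, k⟩
  fin_cases i <;> fin_cases j <;> fin_cases k <;>
    simp [Wst, wBranchPlus, wBranchMinus, vkron, ket3, tp3, tp2, e2, plus, minus]
  all_goals linear_combination (-2 * (Real.sqrt 3 : ℂ)⁻¹) * inv_sqrt_two_mul_self

lemma sin_mul_cos_eq_cos_sq_sub_sin_sq_of_tan_eq {α : ℝ}
    (htan : Real.tan α = (Real.sqrt 5 - 1) / 2) :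
    Real.sin α * Real.cos α = Real.cos α ^ 2 - Real.sin α ^ 2 := by
  have h5 : Real.sqrt 5 ^ 2 = 5 := Real.sq_sqrt (by norm_num)
  have hcos : Real.cos α ≠ 0 := by
    intro h
    rw [Real.tan_eq_sin_div_cos, h, div_zero] at htan
    nlinarith [Real.sqrt_nonneg 5]
  have hsin : Real.sin α = (Real.sqrt 5 - 1) / 2 * Real.cos α := by
    rw [← htan, Real.tan_eq_sin_div_cos, div_mul_cancel₀ _ hcos]
  rw [hsin]
  linear_combination (Real.cos α ^ 2 / 4) * h5

theorem MX_is_test_operator_general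
    (α : ℝ)
    (htan : Real.tan α = (Real.sqrt 5 - 1) / 2) :
    (MX α).IsHermitian ∧ MX α * MX α = MX α ∧ MX α *ᵥ GHZ = GHZ ∧ MX α *ᵥ Wst = Wst := by
  have hMX := isStarProjection_MX α
  have hW := testPlus_mulVec_wBranchPlus α (sin_mul_cos_eq_cos_sq_sub_sin_sq_of_tan_eq htan)
  refine ⟨hMX.isSelfAdjoint, hMX.isIdempotentElem, ?_, ?_⟩
  · rw [GHZ_eq, mulVec_smul, mulVec_add, MX_mulVec_vkron_plus, MX_mulVec_vkron_minus,
      testPlus_mulVec_ghzBranchPlus, testMinus_mulVec_ghzBranchMinus]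
  · rw [Wst_eq, mulVec_smul, mulVec_add, MX_mulVec_vkron_plus, MX_mulVec_vkron_minus, hW,
      testMinus_mulVec_wBranchMinus]

/-- M_X is an orthogonal projector fixing |GHZ⟩ and |W⟩, i.e. a valid test operator for the
three-qubit GHZ-W subspace. -/
theorem MX_is_test_operator
    (α : ℝ) (hα : α ∈ Set.Ioo 0 (Real.pi / 2))
    (htan : Real.tan α = (Real.sqrt 5 - 1) / 2) :
    (MX α).IsHermitian ∧ MX α * MX α = MX α ∧ MX α *ᵥ GHZ = GHZ ∧ MX α *ᵥ Wst = Wst :=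
  MX_is_test_operator_general α htan
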